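/- arXiv:math/0405419 — 6 statements merged into one kernel-verified Lean document; each statement's English description precedes it below -/
import Mathlib

section
/- Let (P, C) be a WI-poset and let β : B(L(P)) → B(P) be the inclusion of box posets induced by the inclusion L(P) ↪ P. Then for each (u, v) ∈ B(P), the fiber β⁻¹({(x,y) ∈ B(L(P)) | (x,y) ≥ (u,v)}) has a minimum element, namely (C² u, C² v). -/
theorem stmt_6 {P : Type*} [PartialOrder P] [Fintype P] (C : P → P)
    (hanti : ∀ x y : P, x ≤ y → C y ≤ C x)
    (hweak : ∀ x : P, x ≤ C (C x)) :
    ∀ u v : P, u ≤ C v → v ≤ C u →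
      IsLeast {p : P × P | C (C p.1) = p.1 ∧ C (C p.2) = p.2 ∧
                           p.1 ≤ C p.2 ∧ p.2 ≤ C p.1 ∧ u ≤ p.1 ∧ v ≤ p.2}
        (C (C u), C (C v)) := by
  intro u v huv hvu
  have h3 : ∀ x : P, C (C (C x)) = C x := fun x =>
    le_antisymm (hanti _ _ (hweak x)) (hweak (C x))
  have hCuv : C (C u) ≤ C v := (hanti _ _ (hanti _ _ huv)).trans_eq (h3 v)
  have hCvu : C (C v) ≤ C u := (hanti _ _ (hanti _ _ hvu)).trans_eq (h3 u)
  constructor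
  · exact ⟨h3 (C u), h3 (C v), (h3 (C u)).symm ▸ hCuv.trans_eq (h3 v).symm,
      (h3 (C v)).symm ▸ hCvu.trans_eq (h3 u).symm, hweak u, hweak v⟩
  · rintro ⟨a, b⟩ ⟨ha, hb, -, -, hua, hvb⟩
    exact ⟨(hanti _ _ (hanti _ _ hua)).trans_eq ha,
      (hanti _ _ (hanti _ _ hvb)).trans_eq hb⟩
end

section
/- Let (P, C) be a WI-poset. If (u, v) ∈ B(P), i.e., u ≤ C v and v ≤ C u, then (C² u, C² v) ∈ B(L(P)); that is, C² u and C² v lie in L(P), C² u ≤ C(C² v), and C² v ≤ C(C² u). -/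
theorem stmt_7 {P : Type*} [PartialOrder P] [Fintype P] (C : P → P)
    (hanti : ∀ x y : P, x ≤ y → C y ≤ C x)
    (hweak : ∀ x : P, x ≤ C (C x)) :
    ∀ u v : P, u ≤ C v → v ≤ C u →
      C (C (C (C u))) = C (C u) ∧ C (C (C (C v))) = C (C v) ∧
      C (C u) ≤ C (C (C v)) ∧ C (C v) ≤ C (C (C u)) := by
  have h3 : ∀ x : P, C (C (C x)) = C x := fun x =>
    le_antisymm (hanti _ _ (hweak x)) (hweak (C x))
  intro u v huv hvu
  refine ⟨?_, ?_, ?_, ?_⟩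
  · rw [h3]
  · rw [h3]
  · exact hanti _ _ (hanti _ _ huv)
  · exact hanti _ _ (hanti _ _ hvu)
end

section
/- Let (P, C) be a WI-poset. In the extended box poset B_ex(P) ⊆ (P ∪ {0̂}) × (P ∪ {0̂}), for each p ∈ P the fiber D = {(x, y) ∈ B(P) | (x, y) ≥ (p, 0̂)} (i.e., x ≥ p, x ≤ C y, y ≤ C x) deformation retracts onto the subposet E = {(p, y) | y ≤ C p ∧ p ≤ C y}, and E has maximum element (p, C p); hence D is contractible. -/
/-- The geometric realization of the order complex of a poset `P`:
formal convex combinations of the points of `P` whose support is a finite chain. -/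
def orderComplexRealization (P : Type*) [Preorder P] : Type _ :=
  {f : P → ℝ // (∀ p, 0 ≤ f p) ∧ (Function.support f).Finite ∧
      IsChain (· ≤ ·) (Function.support f) ∧ ∑ᶠ p, f p = 1}

instance (P : Type*) [Preorder P] : TopologicalSpace (orderComplexRealization P) :=
  instTopologicalSpaceSubtype

/-! The map `r (x, y) = (p, y)` retracts `D` onto `E`, satisfies `r ≤ id`, and is bounded above
by `(p, C p)`, the maximum of `E`. Monotone maps `φ ≤ ψ` induce homotopic maps of order
complexes: stack the weights of a chain from the bottom up on `[0, 1]` and lower a level `s`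
from `1` to `0`, pushing the weight below `s` along `φ` and the weight above `s` along `ψ`.
The support stays a chain, since it is `φ` of a lower segment of the chain together with `ψ` of
an upper segment. Hence `id ≃ r ≃ const (p, C p)` on the order complex of `D`. -/

open scoped Classical
open Finset Function

lemma isChain_image_union_image {X Y : Type*} [Preorder X] [Preorder Y] {φ ψ : X → Y}
    (hφ : Monotone φ) (hψ : Monotone ψ) (hle : φ ≤ ψ)
    {S A B : Set X} (hS : IsChain (· ≤ ·) S) (hA : A ⊆ S) (hB : B ⊆ S)
    (hAB : ∀ a ∈ A, ∀ b ∈ B, ¬ b < a) : IsChain (· ≤ ·) (φ '' A ∪ ψ '' B) := by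
  refine isChain_union.2 ⟨hφ.isChain_image (hS.mono hA), hψ.isChain_image (hS.mono hB), ?_⟩
  rintro _ ⟨a, ha, rfl⟩ _ ⟨b, hb, rfl⟩ -
  have hab : a ≤ b := (hS.total (hA ha) (hB hb)).elim id
    (not_lt_iff_le_imp_ge.1 (hAB a ha b hb))
  exact .inl ((hφ hab).trans (hle b))

namespace orderComplexRealization

section Basic

variable {X : Type*} [Preorder X]

lemma nonneg (f : orderComplexRealization X) (x : X) : 0 ≤ f.1 x := f.2.1 x

lemma isChain_support (f : orderComplexRealization X) : IsChain (· ≤ ·) (support f.1) :=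
  f.2.2.2.1

variable [Fintype X]

lemma sum_eq_one (f : orderComplexRealization X) : ∑ x, f.1 x = 1 := by
  rw [← finsum_eq_sum_of_fintype]
  exact f.2.2.2.2

def mk (g : X → ℝ) (h0 : ∀ x, 0 ≤ g x) (hc : IsChain (· ≤ ·) (support g))
    (h1 : ∑ x, g x = 1) : orderComplexRealization X :=
  ⟨g, h0, Set.toFinite _, hc, by rwa [finsum_eq_sum_of_fintype]⟩

noncomputable def vertex (x : X) : orderComplexRealization X :=
  mk (Pi.single x 1) (fun _ => by simp only [Pi.single_apply]; split_ifs <;> norm_num)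
    ((Set.subsingleton_singleton.anti Pi.support_single_subset).isChain) (by simp)

end Basic

section Pushforward

variable {X Y : Type*} [Fintype X]

noncomputable def pushforward (φ : X → Y) (g : X → ℝ) (y : Y) : ℝ :=
  ∑ x, if φ x = y then g x else 0

variable (φ : X → Y) {g : X → ℝ}

lemma pushforward_nonneg (hg : ∀ x, 0 ≤ g x) (y : Y) : 0 ≤ pushforward φ g y :=
  sum_nonneg fun x _ => by split_ifs <;> simp [hg x]

lemma support_pushforward_subset : support (pushforward φ g) ⊆ φ '' support g := by
  intro y hy
  obtain ⟨x, -, hx⟩ := exists_ne_zero_of_sum_ne_zero hy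
  by_cases h : φ x = y
  · exact ⟨x, by simpa [h] using hx, h⟩
  · simp [h] at hx

lemma sum_pushforward [Fintype Y] : ∑ y, pushforward φ g y = ∑ x, g x := by
  unfold pushforward
  rw [sum_comm]
  simp

lemma continuous_pushforward : Continuous (pushforward (X := X) φ) := by
  refine continuous_pi fun y => continuous_finsetSum _ fun x _ => ?_
  by_cases h : φ x = y <;> simp only [h, if_true, if_false] <;> fun_prop

lemma pushforward_zero : pushforward φ (0 : X → ℝ) = 0 := by
  ext y
  simp [pushforward]

lemma pushforward_id (g : X → ℝ) : pushforward id g = g := by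
  ext x
  simp [pushforward]

lemma pushforward_const (y : Y) (g : X → ℝ) :
    pushforward (fun _ => y) g = Pi.single y (∑ x, g x) := by
  ext y'
  by_cases h : y' = y
  · subst h; simp [pushforward]
  · simp [pushforward, h, Ne.symm h]

end Pushforward

variable {X Y : Type*} [Preorder X] [Fintype X] [Preorder Y] [Fintype Y]

noncomputable def map (φ : X → Y) (hφ : Monotone φ) :
    C(orderComplexRealization X, orderComplexRealization Y) where
  toFun f := mk (pushforward φ f.1) (pushforward_nonneg φ f.nonneg)
    ((hφ.isChain_image f.isChain_support).mono (support_pushforward_subset φ))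
    (by rw [sum_pushforward, f.sum_eq_one])
  continuous_toFun :=
    ((continuous_pushforward φ).comp continuous_subtype_val).subtype_mk _

lemma map_id : map (id : X → X) monotone_id = ContinuousMap.id _ :=
  ContinuousMap.ext fun f => Subtype.ext (pushforward_id f.1)

lemma map_const (y : Y) :
    map (fun _ : X => y) monotone_const = ContinuousMap.const _ (vertex y) :=
  ContinuousMap.ext fun f => Subtype.ext <| by
    change pushforward _ f.1 = Pi.single y 1
    rw [pushforward_const, f.sum_eq_one]

section Sweep

variable {X : Type*} [Preorder X] [Fintype X] {f : X → ℝ}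

noncomputable def cumMass (f : X → ℝ) (x : X) : ℝ :=
  ∑ x' with x' ≤ x, f x'

/-- Stacking the masses of the points of a chain from the bottom up on the interval `[0, 1]`,
the point `x` occupies `[cumMass f x - f x, cumMass f x]`; this is the length of its part
below the level `s`. -/
noncomputable def lowerMass (s : ℝ) (f : X → ℝ) (x : X) : ℝ :=
  min (cumMass f x) s - min (cumMass f x - f x) s

lemma self_le_cumMass (hf : ∀ x, 0 ≤ f x) (x : X) : f x ≤ cumMass f x :=
  single_le_sum (fun x' _ => hf x') (by simp)

lemma cumMass_le_sum (hf : ∀ x, 0 ≤ f x) (x : X) : cumMass f x ≤ ∑ x', f x' :=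
  sum_le_sum_of_subset_of_nonneg (filter_subset _ _) fun x' _ _ => hf x'

lemma cumMass_add_le_of_lt (hf : ∀ x, 0 ≤ f x) {x y : X} (h : x < y) :
    cumMass f x + f y ≤ cumMass f y := by
  have hy : y ∉ univ.filter (· ≤ x) := by simpa using h.not_ge
  have hsub : insert y (univ.filter (· ≤ x)) ⊆ univ.filter (· ≤ y) := by
    intro z hz
    rcases mem_insert.1 hz with rfl | hz
    · simp
    · simpa using (mem_filter.1 hz).2.trans h.le
  calc cumMass f x + f y = ∑ x' ∈ insert y (univ.filter (· ≤ x)), f x' := by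
        rw [sum_insert hy, add_comm, cumMass]
    _ ≤ cumMass f y := sum_le_sum_of_subset_of_nonneg hsub fun x' _ _ => hf x'

lemma lowerMass_nonneg (hf : ∀ x, 0 ≤ f x) (s : ℝ) (x : X) : 0 ≤ lowerMass s f x :=
  sub_nonneg.2 (min_le_min_right _ (by linarith [hf x]))

lemma lowerMass_le (hf : ∀ x, 0 ≤ f x) (s : ℝ) (x : X) : lowerMass s f x ≤ f x := by
  rw [lowerMass, sub_le_iff_le_add', ← min_add_add_right, sub_add_cancel]
  exact min_le_min_left _ (le_add_of_nonneg_right (hf x))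

lemma lowerMass_eq_zero (hf : ∀ x, 0 ≤ f x) {s : ℝ} {x : X} (h : s ≤ cumMass f x - f x) :
    lowerMass s f x = 0 := by
  rw [lowerMass, min_eq_right h, min_eq_right (h.trans (sub_le_self _ (hf x)))]
  ring

lemma lowerMass_eq_self (hf : ∀ x, 0 ≤ f x) {s : ℝ} {x : X} (h : cumMass f x ≤ s) :
    lowerMass s f x = f x := by
  rw [lowerMass, min_eq_left h, min_eq_left ((sub_le_self _ (hf x)).trans h)]
  ring

lemma not_lt_of_lowerMass_ne_zero (hf : ∀ x, 0 ≤ f x) {s : ℝ} {x y : X}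
    (hx : lowerMass s f x ≠ 0) (hy : f y - lowerMass s f y ≠ 0) : ¬ y < x := by
  intro hyx
  have hx' : cumMass f x - f x < s := lt_of_not_ge fun h => hx (lowerMass_eq_zero hf h)
  have hy' : s < cumMass f y :=
    lt_of_not_ge fun h => hy (by rw [lowerMass_eq_self hf h, sub_self])
  linarith [cumMass_add_le_of_lt hf hyx]

lemma support_lowerMass_subset (hf : ∀ x, 0 ≤ f x) (s : ℝ) :
    support (lowerMass s f) ⊆ support f := fun x hx hfx =>
  hx (le_antisymm ((lowerMass_le hf s x).trans hfx.le) (lowerMass_nonneg hf s x))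

lemma support_sub_lowerMass_subset (hf : ∀ x, 0 ≤ f x) (s : ℝ) :
    support (f - lowerMass s f) ⊆ support f :=
  (support_sub _ _).trans (Set.union_subset subset_rfl (support_lowerMass_subset hf s))

lemma continuous_lowerMass (x : X) :
    Continuous fun z : ℝ × (X → ℝ) => lowerMass z.1 z.2 x := by
  unfold lowerMass cumMass
  fun_prop

end Sweep

variable {X Y : Type*} [Preorder X] [Fintype X] {φ ψ : X → Y}

noncomputable def sweep (φ ψ : X → Y) (s : ℝ) (f : X → ℝ) : Y → ℝ :=
  pushforward φ (lowerMass s f) + pushforward ψ (f - lowerMass s f)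

variable (φ ψ)

lemma continuous_sweep : Continuous fun z : ℝ × (X → ℝ) => sweep φ ψ z.1 z.2 := by
  have h : Continuous fun z : ℝ × (X → ℝ) => lowerMass z.1 z.2 :=
    continuous_pi continuous_lowerMass
  exact ((continuous_pushforward φ).comp h).add
    ((continuous_pushforward ψ).comp (continuous_snd.sub h))

variable {φ ψ}

lemma sweep_nonneg {f : X → ℝ} (hf : ∀ x, 0 ≤ f x) (s : ℝ) (y : Y) :
    0 ≤ sweep φ ψ s f y :=
  add_nonneg (pushforward_nonneg φ (lowerMass_nonneg hf s) y)
    (pushforward_nonneg ψ (fun x => sub_nonneg.2 (lowerMass_le hf s x)) y)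

lemma sum_sweep [Fintype Y] (f : X → ℝ) (s : ℝ) : ∑ y, sweep φ ψ s f y = ∑ x, f x := by
  simp only [sweep, Pi.add_apply, sum_add_distrib, sum_pushforward, Pi.sub_apply,
    sum_sub_distrib, add_sub_cancel]

lemma isChain_support_sweep [Preorder Y] (hφ : Monotone φ) (hψ : Monotone ψ) (hle : φ ≤ ψ)
    (f : orderComplexRealization X) (s : ℝ) :
    IsChain (· ≤ ·) (support (sweep φ ψ s f.1)) := by
  refine (isChain_image_union_image hφ hψ hle f.isChain_support
    (support_lowerMass_subset f.nonneg s) (support_sub_lowerMass_subset f.nonneg s)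
    fun a ha b hb => not_lt_of_lowerMass_ne_zero f.nonneg ha hb).mono ?_
  exact (support_add _ _).trans
    (Set.union_subset_union (support_pushforward_subset φ) (support_pushforward_subset ψ))

lemma sweep_of_one_le {f : orderComplexRealization X} {s : ℝ} (hs : 1 ≤ s) :
    sweep φ ψ s f.1 = pushforward φ f.1 := by
  have : lowerMass s f.1 = f.1 := funext fun x => lowerMass_eq_self f.nonneg
    ((cumMass_le_sum f.nonneg x).trans (f.sum_eq_one.le.trans hs))
  rw [sweep, this, sub_self, pushforward_zero, add_zero]

lemma sweep_of_nonpos {f : orderComplexRealization X} {s : ℝ} (hs : s ≤ 0) :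
    sweep φ ψ s f.1 = pushforward ψ f.1 := by
  have : lowerMass s f.1 = 0 := funext fun x => lowerMass_eq_zero f.nonneg
    (hs.trans (sub_nonneg.2 (self_le_cumMass f.nonneg x)))
  rw [sweep, this, sub_zero, pushforward_zero, zero_add]

variable [Preorder Y] [Fintype Y]

theorem map_homotopic_of_le (hφ : Monotone φ) (hψ : Monotone ψ) (hle : φ ≤ ψ) :
    (map φ hφ).Homotopic (map ψ hψ) :=
  ⟨{ toFun := fun z => mk (sweep φ ψ (1 - z.1) z.2.1) (sweep_nonneg z.2.nonneg _)
        (isChain_support_sweep hφ hψ hle z.2 _) (by rw [sum_sweep, z.2.sum_eq_one])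
     continuous_toFun := ((continuous_sweep φ ψ).comp
        (((continuous_const.sub continuous_subtype_val).comp continuous_fst).prodMk
          (continuous_subtype_val.comp continuous_snd))).subtype_mk _
     map_zero_left := fun f => Subtype.ext (sweep_of_one_le (by simp))
     map_one_left := fun f => Subtype.ext (sweep_of_nonpos (by simp)) }⟩

theorem contractibleSpace_of_monotone_le_id {r : X → X} (hr : Monotone r)
    (hr_le : ∀ x, r x ≤ x) {m : X} (hm : ∀ x, r x ≤ m) : ContractibleSpace (orderComplexRealization X) := by
  rw [contractible_iff_id_nullhomotopic]
  have h_id := map_homotopic_of_le hr monotone_id hr_le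
  have h_const := map_homotopic_of_le hr monotone_const hm
  rw [map_id] at h_id
  rw [map_const] at h_const
  exact ⟨vertex m, h_id.symm.trans h_const⟩

end orderComplexRealization

theorem stmt_10 {P : Type*} [PartialOrder P] [Fintype P] (C : P → P)
    (hanti : ∀ x y : P, x ≤ y → C y ≤ C x)
    (hweak : ∀ x : P, x ≤ C (C x)) (p : P) :
    -- D is the fiber over (p, 0̂), E the image of the retraction (x,y) ↦ (p,y)
    (∃ r : {q : P × P // p ≤ q.1 ∧ q.1 ≤ C q.2 ∧ q.2 ≤ C q.1} →
           {q : P × P // p ≤ q.1 ∧ q.1 ≤ C q.2 ∧ q.2 ≤ C q.1},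
       Monotone r ∧ (∀ d, r d ≤ d) ∧
       (∀ d, ((r d : P × P) ∈ {q : P × P | q.1 = p ∧ q.2 ≤ C p ∧ p ≤ C q.2})) ∧
       (∀ q ∈ {q : P × P | q.1 = p ∧ q.2 ≤ C p ∧ p ≤ C q.2}, ∃ d, (r d : P × P) = q)) ∧
    IsGreatest {q : P × P | q.1 = p ∧ q.2 ≤ C p ∧ p ≤ C q.2} (p, C p) ∧
    ContractibleSpace (orderComplexRealization
      {q : P × P // p ≤ q.1 ∧ q.1 ≤ C q.2 ∧ q.2 ≤ C q.1}) := by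
  have hE : ∀ q : P × P,
      p ≤ q.1 ∧ q.1 ≤ C q.2 ∧ q.2 ≤ C q.1 → q.2 ≤ C p ∧ p ≤ C q.2 :=
    fun q ⟨hp, hxy, hyx⟩ => ⟨hyx.trans (hanti p q.1 hp), hp.trans hxy⟩
  let r : {q : P × P // p ≤ q.1 ∧ q.1 ≤ C q.2 ∧ q.2 ≤ C q.1} →
      {q : P × P // p ≤ q.1 ∧ q.1 ≤ C q.2 ∧ q.2 ≤ C q.1} :=
    fun d => ⟨(p, d.1.2), le_rfl, (hE d.1 d.2).2, (hE d.1 d.2).1⟩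
  have hr_mono : Monotone r := fun _ _ h => ⟨le_rfl, h.2⟩
  have hr_le : ∀ d, r d ≤ d := fun d => ⟨d.2.1, le_rfl⟩
  refine ⟨⟨r, hr_mono, hr_le, fun d => ⟨rfl, hE d.1 d.2⟩, fun q hq => ?_⟩,
    ⟨⟨rfl, le_rfl, hweak p⟩, fun q hq => ⟨hq.1.le, hq.2.1⟩⟩, ?_⟩
  · exact ⟨⟨(p, q.2), le_rfl, hq.2.2, hq.2.1⟩, Prod.ext hq.1.symm rfl⟩
  · exact orderComplexRealization.contractibleSpace_of_monotone_le_id hr_mono hr_le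
      (m := ⟨(p, C p), le_rfl, hweak p, le_rfl⟩) fun d => ⟨le_rfl, (hE d.1 d.2).1⟩
end

section
/- Let K and L be simplicial complexes and G a graph on vertex set [m]. Then the G-deleted join (K * L)_G^{*m} is simplicially isomorphic to K_G^{*m} * L_G^{*m}. -/
open Finset

/-- The `i`-th joinSlice of a face of a join indexed by `ι`. -/
def joinSlice {ι α : Type*} [DecidableEq ι] [DecidableEq α]
    (s : Finset (ι × α)) (i : ι) : Finset α :=
  (s.filter (fun p => p.1 = i)).image Prod.snd

/-- The `G`-deleted `m`-fold join of a simplicial complex `K` (faces as finsets). -/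
def deletedJoin {m : ℕ} {α : Type*} [DecidableEq α]
    (G : SimpleGraph (Fin m)) (K : Set (Finset α)) : Set (Finset (Fin m × α)) :=
  {s | (∀ i : Fin m, joinSlice s i ∈ K) ∧
       ∀ i j : Fin m, G.Adj i j → Disjoint (joinSlice s i) (joinSlice s j)}

/-- The simplicial join of two complexes. -/
def simpJoin {α β : Type*} [DecidableEq α] [DecidableEq β]
    (K : Set (Finset α)) (L : Set (Finset β)) : Set (Finset (α ⊕ β)) :=
  {s | ∃ σ ∈ K, ∃ τ ∈ L,
    s = σ.map ⟨Sum.inl, Sum.inl_injective⟩ ∪ τ.map ⟨Sum.inr, Sum.inr_injective⟩}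

lemma mem_joinSlice {ι α : Type*} [DecidableEq ι] [DecidableEq α]
    {s : Finset (ι × α)} {i : ι} {a : α} : a ∈ joinSlice s i ↔ (i, a) ∈ s := by
  simp only [joinSlice, mem_image, mem_filter, Prod.exists]
  constructor
  · rintro ⟨x, y, ⟨h, rfl⟩, rfl⟩; exact h
  · intro h; exact ⟨i, a, ⟨h, rfl⟩, rfl⟩

lemma toLeft_toRight_decomp {α β : Type*} [DecidableEq α] [DecidableEq β] (u : Finset (α ⊕ β)) :
    u = u.toLeft.map ⟨Sum.inl, Sum.inl_injective⟩ ∪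
        u.toRight.map ⟨Sum.inr, Sum.inr_injective⟩ := by
  ext x
  cases x with
  | inl a => simp
  | inr b => simp

lemma mem_simpJoin {α β : Type*} [DecidableEq α] [DecidableEq β]
    {K : Set (Finset α)} {L : Set (Finset β)} {u : Finset (α ⊕ β)} :
    u ∈ simpJoin K L ↔ u.toLeft ∈ K ∧ u.toRight ∈ L := by
  constructor
  · rintro ⟨σ, hσ, τ, hτ, rfl⟩
    constructor
    · convert hσ using 1; ext a; simp
    · convert hτ using 1; ext b; simp
  · rintro ⟨h1, h2⟩
    exact ⟨_, h1, _, h2, toLeft_toRight_decomp u⟩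

theorem stmt_14 {m : ℕ} {α β : Type*} [DecidableEq α] [DecidableEq β]
    (G : SimpleGraph (Fin m)) (K : Set (Finset α)) (L : Set (Finset β))
    (hK : ∀ s ∈ K, ∀ t ⊆ s, t ∈ K) (hL : ∀ s ∈ L, ∀ t ⊆ s, t ∈ L)
    (hKe : (∅ : Finset α) ∈ K) (hLe : (∅ : Finset β) ∈ L) :
    ∀ s : Finset (Fin m × (α ⊕ β)),
      s ∈ deletedJoin G (simpJoin K L) ↔
      s.map (Equiv.prodSumDistrib (Fin m) α β).toEmbedding ∈
        simpJoin (deletedJoin G K) (deletedJoin G L) := by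
  intro s
  set e := Equiv.prodSumDistrib (Fin m) α β
  have hL1 : ∀ i : Fin m, joinSlice (s.map e.toEmbedding).toLeft i
      = (joinSlice s i).toLeft := by
    intro i; ext a
    simp only [mem_joinSlice, mem_toLeft, mem_map_equiv]
    rfl
  have hR1 : ∀ i : Fin m, joinSlice (s.map e.toEmbedding).toRight i
      = (joinSlice s i).toRight := by
    intro i; ext b
    simp only [mem_joinSlice, mem_toRight, mem_map_equiv]
    rfl
  have hdisj : ∀ (u v : Finset (α ⊕ β)), Disjoint u v ↔
      (Disjoint u.toLeft v.toLeft ∧ Disjoint u.toRight v.toRight) := by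
    intro u v
    simp only [Finset.disjoint_left, mem_toLeft, mem_toRight]
    constructor
    · intro h
      exact ⟨fun a ha => h ha, fun b hb => h hb⟩
    · rintro ⟨h1, h2⟩ x hx
      cases x with
      | inl a => exact h1 hx
      | inr b => exact h2 hx
  rw [mem_simpJoin]
  constructor
  · rintro ⟨hf, hd⟩
    refine ⟨⟨fun i => ?_, fun i j hij => ?_⟩, ⟨fun i => ?_, fun i j hij => ?_⟩⟩
    · rw [hL1]; exact (mem_simpJoin.mp (hf i)).1
    · rw [hL1, hL1]; exact ((hdisj _ _).mp (hd i j hij)).1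
    · rw [hR1]; exact (mem_simpJoin.mp (hf i)).2
    · rw [hR1, hR1]; exact ((hdisj _ _).mp (hd i j hij)).2
  · rintro ⟨⟨hf1, hd1⟩, hf2, hd2⟩
    refine ⟨fun i => mem_simpJoin.mpr ⟨?_, ?_⟩, fun i j hij => (hdisj _ _).mpr ⟨?_, ?_⟩⟩
    · rw [← hL1]; exact hf1 i
    · rw [← hR1]; exact hf2 i
    · rw [← hL1, ← hL1]; exact hd1 i j hij
    · rw [← hR1, ← hR1]; exact hd2 i j hij
end

section
/- The extended Hom-poset Hom_ex(G, K_n) (functions φ : V_G → 𝒫([n]), not all empty, with φ(i) ∩ φ(j) = ∅ for each edge {i,j} ∈ E_G) is isomorphic, as a simplicial complex via graphs Γ(φ) ⊆ V_G × [n], to the n-fold join Ind(G)^{*n} of the independence complex of G. -/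
open Finset

/-- The independence complex of a graph. -/
def indComplex {V : Type*} (G : SimpleGraph V) : Set (Finset V) :=
  {s | ∀ i ∈ s, ∀ j ∈ s, ¬ G.Adj i j}

/-- The `n`-fold join of a simplicial complex `K`. -/
def nJoin {α : Type*} [DecidableEq α] (n : ℕ) (K : Set (Finset α)) :
    Set (Finset (Fin n × α)) :=
  {t | ∀ k : Fin n, joinSlice t k ∈ K}

/-- Faces of the extended Hom-poset `Hom_ex(G, K_n)`, identified with the graphs
`Γ(φ) ⊆ V_G × [n]` of functions `φ : V_G → 𝒫([n])`, not all empty, such that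
`φ(i) ∩ φ(j) = ∅` for every edge `{i,j}` of `G`. -/
def homExFaces {m : ℕ} (G : SimpleGraph (Fin m)) (n : ℕ) :
    Set (Finset (Fin m × Fin n)) :=
  {s | s.Nonempty ∧ ∀ i j : Fin m, G.Adj i j → Disjoint (joinSlice s i) (joinSlice s j)}

theorem stmt_16 {m n : ℕ} (G : SimpleGraph (Fin m)) :
    ∀ s : Finset (Fin m × Fin n),
      s ∈ homExFaces G n ↔
      (s.Nonempty ∧
        s.map (Equiv.prodComm (Fin m) (Fin n)).toEmbedding ∈ nJoin n (indComplex G)) := by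
  intro s
  have hmem : ∀ (ι α : Type) [DecidableEq ι] [DecidableEq α] (t : Finset (ι × α)) (i : ι)
      (x : α), x ∈ joinSlice t i ↔ (i, x) ∈ t := by
    intro ι α _ _ t i x
    simp only [joinSlice, mem_image, mem_filter, Prod.exists]
    constructor
    · rintro ⟨a, b, ⟨hab, rfl⟩, rfl⟩; exact hab
    · intro h; exact ⟨i, x, ⟨h, rfl⟩, rfl⟩
  constructor
  · rintro ⟨hne, hdisj⟩
    refine ⟨hne, fun k => ?_⟩
    intro i hi j hj hadj
    rw [hmem] at hi hj
    simp only [mem_map, Equiv.coe_toEmbedding, Equiv.prodComm_apply, Prod.exists] at hi hj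
    obtain ⟨a, b, hab, heq⟩ := hi
    obtain ⟨c, d, hcd, heq'⟩ := hj
    have hb : k = b := (congrArg Prod.fst heq).symm
    have ha : i = a := (congrArg Prod.snd heq).symm
    have hd : k = d := (congrArg Prod.fst heq').symm
    have hc : j = c := (congrArg Prod.snd heq').symm
    subst hb ha hd hc
    have := hdisj i j hadj
    rw [Finset.disjoint_left] at this
    exact this ((hmem _ _ _ _ _).2 hab) ((hmem _ _ _ _ _).2 hcd)
  · rintro ⟨hne, hjoin⟩
    refine ⟨hne, fun i j hadj => ?_⟩
    rw [Finset.disjoint_left]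
    intro x hxi hxj
    rw [hmem] at hxi hxj
    have h1 : i ∈ joinSlice (s.map (Equiv.prodComm (Fin m) (Fin n)).toEmbedding) x := by
      rw [hmem]
      simp only [mem_map, Equiv.coe_toEmbedding, Equiv.prodComm_apply, Prod.exists]
      exact ⟨i, x, hxi, rfl⟩
    have h2 : j ∈ joinSlice (s.map (Equiv.prodComm (Fin m) (Fin n)).toEmbedding) x := by
      rw [hmem]
      simp only [mem_map, Equiv.coe_toEmbedding, Equiv.prodComm_apply, Prod.exists]
      exact ⟨j, x, hxj, rfl⟩
    exact hjoin x i h1 j h2 hadj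
end

section
/- Let G be a graph with distinct vertices a, b, v such that {a,b} ∈ E_G, {b,v} ∈ E_G, and a has degree 1 in G. Then the inclusion Ind(G \ v) ↪ Ind(G) is a homotopy equivalence of independence complexes. -/
/-- The independence complex of `G` restricted to vertices in `A`. -/
def indOn {V : Type*} (G : SimpleGraph V) (A : Set V) : Set (Finset V) :=
  {s | (↑s : Set V) ⊆ A ∧ ∀ i ∈ s, ∀ j ∈ s, ¬ G.Adj i j}

/-- The geometric realization of a simplicial complex with vertex set `V`,
whose faces are the finsets in `K`. -/
def simpRealization {V : Type*} (K : Set (Finset V)) : Type _ :=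
  {f : V → ℝ // (∀ v, 0 ≤ f v) ∧ (∃ s ∈ K, Function.support f ⊆ ↑s) ∧ ∑ᶠ v, f v = 1}

instance {V : Type*} (K : Set (Finset V)) : TopologicalSpace (simpRealization K) :=
  instTopologicalSpaceSubtype

/-- Move a `t` fraction of the weight at `v` to `a`. -/
def mapFun {V : Type*} [DecidableEq V] (a v : V) (t : ℝ) (f : V → ℝ) : V → ℝ :=
  fun w => if w = v then (1 - t) * f v else if w = a then f a + t * f v else f w

lemma mapFun_zero {V : Type*} [DecidableEq V] (a v : V) (f : V → ℝ) :
    mapFun a v 0 f = f := by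
  funext w
  simp only [mapFun]
  split_ifs with h1 h2
  · subst h1; ring
  · subst h2; ring
  · rfl

lemma mapFun_of_fv_zero {V : Type*} [DecidableEq V] (a v : V) (t : ℝ) (f : V → ℝ)
    (hf : f v = 0) : mapFun a v t f = f := by
  funext w
  simp only [mapFun]
  split_ifs with h1 h2
  · subst h1; rw [hf]; ring
  · subst h2; rw [hf]; ring
  · rfl

lemma mapFun_nonneg {V : Type*} [DecidableEq V] (a v : V) (t : ℝ) (f : V → ℝ)
    (ht0 : 0 ≤ t) (ht1 : t ≤ 1) (hf : ∀ w, 0 ≤ f w) (w : V) : 0 ≤ mapFun a v t f w := by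
  simp only [mapFun]
  split_ifs with h1 h2
  · exact mul_nonneg (by linarith) (hf v)
  · exact add_nonneg (hf a) (mul_nonneg ht0 (hf v))
  · exact hf w

lemma mapFun_support {V : Type*} [DecidableEq V] (a v : V) (t : ℝ) (f : V → ℝ) :
    Function.support (mapFun a v t f) ⊆ insert a (Function.support f) := by
  intro w hw
  simp only [Function.mem_support, mapFun] at hw
  split_ifs at hw with h1 h2
  · subst h1
    refine Set.mem_insert_of_mem _ ?_
    simp only [Function.mem_support]
    intro h; rw [h, mul_zero] at hw; exact hw rfl
  · subst h2; exact Set.mem_insert _ _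
  · exact Set.mem_insert_of_mem _ hw

lemma mapFun_support_one {V : Type*} [DecidableEq V] (a v : V) (f : V → ℝ) :
    Function.support (mapFun a v 1 f) ⊆ insert a (Function.support f \ {v}) := by
  intro w hw
  simp only [Function.mem_support, mapFun] at hw
  split_ifs at hw with h1 h2
  · simp at hw
  · subst h2; exact Set.mem_insert _ _
  · exact Set.mem_insert_of_mem _ ⟨hw, h1⟩

lemma mapFun_finsum {V : Type*} [Fintype V] [DecidableEq V] (a v : V) (hav : a ≠ v)
    (t : ℝ) (f : V → ℝ) : ∑ᶠ w, mapFun a v t f w = ∑ᶠ w, f w := by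
  rw [finsum_eq_sum_of_fintype, finsum_eq_sum_of_fintype]
  have hv : v ∈ Finset.univ := Finset.mem_univ v
  have ha : a ∈ (Finset.univ.erase v) := Finset.mem_erase.2 ⟨hav, Finset.mem_univ a⟩
  rw [← Finset.add_sum_erase _ _ hv, ← Finset.add_sum_erase _ _ ha,
      ← Finset.add_sum_erase _ f hv, ← Finset.add_sum_erase _ f ha]
  have h1 : mapFun a v t f v = (1 - t) * f v := by simp [mapFun]
  have h2 : mapFun a v t f a = f a + t * f v := by simp [mapFun, hav]
  have h3 : ∀ w ∈ (Finset.univ.erase v).erase a, mapFun a v t f w = f w := by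
    intro w hw
    simp only [Finset.mem_erase] at hw
    simp [mapFun, hw.1, hw.2.1]
  rw [Finset.sum_congr rfl h3, h1, h2]
  ring

lemma mapFun_continuous {V : Type*} [DecidableEq V] (a v : V) :
    Continuous (fun p : ℝ × (V → ℝ) => mapFun a v p.1 p.2) := by
  refine continuous_pi fun w => ?_
  simp only [mapFun]
  split_ifs with h1 h2
  · exact (continuous_const.sub continuous_fst).mul ((continuous_apply v).comp continuous_snd)
  · exact ((continuous_apply a).comp continuous_snd).add
      (continuous_fst.mul ((continuous_apply v).comp continuous_snd))
  · exact (continuous_apply w).comp continuous_snd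

lemma insert_indep {V : Type*} [DecidableEq V] (G : SimpleGraph V) (a b v : V)
    (hbv : G.Adj b v) (hdeg : G.neighborSet a = {b})
    {s : Finset V} (hs : ∀ i ∈ s, ∀ j ∈ s, ¬ G.Adj i j) (hv : v ∈ s) :
    ∀ i ∈ insert a s, ∀ j ∈ insert a s, ¬ G.Adj i j := by
  have hb : b ∉ s := fun hb => hs b hb v hv hbv
  have hadj : ∀ j, G.Adj a j → j = b := by
    intro j hj
    have : j ∈ G.neighborSet a := hj
    rw [hdeg] at this; exact this
  intro i hi j hj hadj'
  rcases Finset.mem_insert.1 hi with hia | hi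
  · rw [hia] at hadj'
    rcases Finset.mem_insert.1 hj with hja | hj
    · rw [hja] at hadj'; exact G.irrefl hadj'
    · exact hb ((hadj j hadj') ▸ hj)
  · rcases Finset.mem_insert.1 hj with hja | hj
    · rw [hja] at hadj'; exact hb ((hadj i hadj'.symm) ▸ hi)
    · exact hs i hi j hj hadj'

lemma memA {V : Type*} [Fintype V] [DecidableEq V] (G : SimpleGraph V) (a b v : V)
    (hbv : G.Adj b v) (hav : a ≠ v) (hdeg : G.neighborSet a = {b})
    {t : ℝ} (ht0 : 0 ≤ t) (ht1 : t ≤ 1) (f : V → ℝ)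
    (hf : (∀ w, 0 ≤ f w) ∧ (∃ s ∈ indOn G Set.univ, Function.support f ⊆ ↑s) ∧ ∑ᶠ w, f w = 1) :
    (∀ w, 0 ≤ mapFun a v t f w) ∧
      (∃ s ∈ indOn G Set.univ, Function.support (mapFun a v t f) ⊆ ↑s) ∧
      ∑ᶠ w, mapFun a v t f w = 1 := by
  obtain ⟨hpos, ⟨s, hsK, hsupp⟩, hsum⟩ := hf
  refine ⟨mapFun_nonneg a v t f ht0 ht1 hpos, ?_, by rw [mapFun_finsum a v hav]; exact hsum⟩
  by_cases hvs : v ∈ s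
  · refine ⟨insert a s, ⟨fun _ _ => Set.mem_univ _, insert_indep G a b v hbv hdeg hsK.2 hvs⟩, ?_⟩
    refine (mapFun_support a v t f).trans ?_
    rw [Finset.coe_insert]
    exact Set.insert_subset_insert hsupp
  · have hfv : f v = 0 := by
      by_contra h
      exact hvs (Finset.mem_coe.1 (hsupp h))
    rw [mapFun_of_fv_zero a v t f hfv]
    exact ⟨s, hsK, hsupp⟩

lemma memB {V : Type*} [Fintype V] [DecidableEq V] (G : SimpleGraph V) (a b v : V)
    (hbv : G.Adj b v) (hav : a ≠ v) (hdeg : G.neighborSet a = {b}) (f : V → ℝ)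
    (hf : (∀ w, 0 ≤ f w) ∧ (∃ s ∈ indOn G Set.univ, Function.support f ⊆ ↑s) ∧ ∑ᶠ w, f w = 1) :
    (∀ w, 0 ≤ mapFun a v 1 f w) ∧
      (∃ s ∈ indOn G ({v}ᶜ : Set V), Function.support (mapFun a v 1 f) ⊆ ↑s) ∧
      ∑ᶠ w, mapFun a v 1 f w = 1 := by
  obtain ⟨hpos, ⟨s, hsK, hsupp⟩, hsum⟩ := hf
  refine ⟨mapFun_nonneg a v 1 f zero_le_one le_rfl hpos, ?_,
    by rw [mapFun_finsum a v hav]; exact hsum⟩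
  by_cases hvs : v ∈ s
  · refine ⟨insert a (s.erase v), ⟨?_, ?_⟩, ?_⟩
    · intro w hw
      simp only [Finset.coe_insert, Set.mem_insert_iff, Finset.mem_coe, Finset.mem_erase] at hw
      rcases hw with rfl | hw
      · exact hav
      · exact hw.1
    · have hbig := insert_indep G a b v hbv hdeg hsK.2 hvs
      have hsub : insert a (s.erase v) ⊆ insert a s :=
        Finset.insert_subset_insert a (Finset.erase_subset v s)
      exact fun i hi j hj => hbig i (hsub hi) j (hsub hj)
    · refine (mapFun_support_one a v f).trans ?_
      rw [Finset.coe_insert, Finset.coe_erase]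
      exact Set.insert_subset_insert (Set.diff_subset_diff_left hsupp)
  · have hfv : f v = 0 := by
      by_contra h
      exact hvs (Finset.mem_coe.1 (hsupp h))
    rw [mapFun_of_fv_zero a v 1 f hfv]
    refine ⟨s, ⟨?_, hsK.2⟩, hsupp⟩
    intro w hw
    exact fun hwv => hvs (by rwa [← Set.mem_singleton_iff.1 hwv])

theorem stmt_18 {V : Type*} [Fintype V] [DecidableEq V] (G : SimpleGraph V)
    (a b v : V) (hab : G.Adj a b) (hbv : G.Adj b v)
    (hav : a ≠ v) (hdeg : G.neighborSet a = {b}) :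
    ∃ h : ContinuousMap.HomotopyEquiv
        (simpRealization (indOn G {v}ᶜ)) (simpRealization (indOn G Set.univ)),
      ∀ x : simpRealization (indOn G {v}ᶜ), (h.toFun x).val = x.val := by
  classical
  set X := simpRealization (indOn G ({v}ᶜ : Set V))
  set Y := simpRealization (indOn G (Set.univ : Set V))
  -- the inclusion
  have hXval : ∀ x : X, x.val v = 0 := by
    intro x
    obtain ⟨hpos, ⟨s, hsK, hsupp⟩, hsum⟩ := x.2
    by_contra h
    exact hsK.1 (hsupp h) rfl
  let incl : C(X, Y) := ⟨fun x => ⟨x.val,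
      x.2.1, ⟨x.2.2.1.choose, ⟨fun _ _ => Set.mem_univ _, x.2.2.1.choose_spec.1.2⟩,
        x.2.2.1.choose_spec.2⟩, x.2.2.2⟩,
    Continuous.subtype_mk continuous_subtype_val _⟩
  let ret : C(Y, X) := ⟨fun y => ⟨mapFun a v 1 y.val, memB G a b v hbv hav hdeg y.val y.2⟩,
    Continuous.subtype_mk
      ((mapFun_continuous a v).comp (continuous_const.prodMk continuous_subtype_val)) _⟩
  have hleft : ret.comp incl = ContinuousMap.id X := by
    ext x
    exact Subtype.ext (mapFun_of_fv_zero a v 1 x.val (hXval x))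
  refine ⟨⟨incl, ret, ?_, ?_⟩, fun x => rfl⟩
  · rw [hleft]
  · -- homotopy from incl.comp ret to id
    refine ⟨⟨⟨fun p => ⟨mapFun a v (1 - (p.1 : ℝ)) p.2.val,
        memA G a b v hbv hav hdeg (by simpa using p.1.2.2) (by simpa using p.1.2.1)
          p.2.val p.2.2⟩, ?_⟩, ?_, ?_⟩⟩
    · refine Continuous.subtype_mk ?_ _
      exact (mapFun_continuous a v).comp
        ((continuous_const.sub (continuous_subtype_val.comp continuous_fst)).prodMk
          (continuous_subtype_val.comp continuous_snd))
    · intro y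
      apply Subtype.ext
      show mapFun a v (1 - ((0 : unitInterval) : ℝ)) y.val = _
      norm_num
      rfl
    · intro y
      apply Subtype.ext
      show mapFun a v (1 - ((1 : unitInterval) : ℝ)) y.val = _
      norm_num [mapFun_zero]
end
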